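/- arXiv:1307.5498 — 7 statements merged into one kernel-verified Lean document; each statement's English description precedes it below -/
import Mathlib

section
/- The multiplicative group of an infinite field is not finitely generated. -/
theorem int_isJacobsonRing : IsJacobsonRing ℤ := by
  rw [isJacobsonRing_iff_prime_eq]
  intro P hP
  rcases eq_or_ne P ⊥ with rfl | hne
  · refine le_antisymm ?_ Ideal.le_jacobson
    intro x hx
    rw [Ideal.mem_bot]
    by_contra hx0
    obtain ⟨p, hlt, hp⟩ := Nat.exists_infinite_primes (x.natAbs + 1)
    have hmax : (Ideal.span {(p : ℤ)}).IsMaximal :=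
      PrincipalIdealRing.isMaximal_of_irreducible (Nat.prime_iff_prime_int.mp hp).irreducible
    rw [Ideal.jacobson, Ideal.mem_sInf] at hx
    have hd : (p : ℤ) ∣ x := Ideal.mem_span_singleton.mp (hx ⟨bot_le, hmax⟩)
    have := Int.le_of_dvd (abs_pos.mpr hx0) ((dvd_abs _ _).mpr hd)
    rw [Int.abs_eq_natAbs] at this
    omega
  · exact Ideal.jacobson_eq_self_of_isMaximal (H := IsPrime.to_maximal_ideal hne)

/-- The multiplicative group of an infinite field is not finitely generated. -/
theorem units_not_fg_of_infinite_field (F : Type*) [Field F] [Infinite F] :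
    ¬ Group.FG Fˣ := by
  intro hfg
  obtain ⟨S, hS⟩ := hfg.1
  -- the subring generated by the generators and their inverses is all of F
  set T : Set F := ((fun u : Fˣ => (u : F)) '' S) ∪ ((fun u : Fˣ => ((u⁻¹ : Fˣ) : F)) '' S)
    with hT
  have hTfin : T.Finite := (S.finite_toSet.image _).union (S.finite_toSet.image _)
  set A : Subalgebra ℤ F := Algebra.adjoin ℤ T with hA
  have htop : A = ⊤ := by
    rw [eq_top_iff]
    intro x _
    rcases eq_or_ne x 0 with rfl | hx
    · exact A.zero_mem
    · let H : Subgroup Fˣ :=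
        { carrier := {u : Fˣ | (u : F) ∈ A ∧ ((u⁻¹ : Fˣ) : F) ∈ A}
          one_mem' := ⟨A.one_mem, by simpa using A.one_mem⟩
          mul_mem' := fun {a b} ha hb => ⟨A.mul_mem ha.1 hb.1, by
            simpa [mul_comm] using A.mul_mem ha.2 hb.2⟩
          inv_mem' := fun {a} ha => ⟨ha.2, by simpa using ha.1⟩ }
      have hSH : (S : Set Fˣ) ⊆ H := by
        intro u hu
        exact ⟨Algebra.subset_adjoin (Or.inl ⟨u, hu, rfl⟩),
          Algebra.subset_adjoin (Or.inr ⟨u, hu, rfl⟩)⟩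
      have hmem : (Units.mk0 x hx : Fˣ) ∈ H := by
        have hle : (⊤ : Subgroup Fˣ) ≤ H := by
          rw [← hS]; exact (Subgroup.closure_le H).2 hSH
        exact hle (Subgroup.mem_top _)
      exact hmem.1
  have hft : Algebra.FiniteType ℤ F := by
    refine ⟨⟨hTfin.toFinset, ?_⟩⟩
    rwa [hTfin.coe_toFinset]
  haveI : IsJacobsonRing ℤ := int_isJacobsonRing
  have hfin : Module.Finite ℤ F := finite_of_finite_type_of_isJacobsonRing ℤ F
  have hint : Algebra.IsIntegral ℤ F := Algebra.IsIntegral.of_finite ℤ F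
  rcases CharP.char_is_prime_or_zero F (ringChar F) with hp | hp
  · -- positive characteristic: F is a finite-dimensional 𝔽_p-space, so finite
    haveI : Fact (Nat.Prime (ringChar F)) := ⟨hp⟩
    letI : Algebra (ZMod (ringChar F)) F := ZMod.algebra _ _
    haveI : Module.Finite (ZMod (ringChar F)) F :=
      Module.Finite.of_restrictScalars_finite ℤ (ZMod (ringChar F)) F
    haveI : Finite F := Module.finite_of_finite (ZMod (ringChar F))
    exact not_finite F
  · -- characteristic zero: ℤ would be a field
    haveI : CharP F 0 := hp ▸ ringChar.charP F
    haveI : CharZero F := CharP.charP_to_charZero F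
    have hinj : Function.Injective (algebraMap ℤ F) := fun a b h => by
      simpa using h
    exact Int.not_isField
      (isField_of_isIntegral_of_isField hinj (Field.toIsField F))
end

section
/- If the multiplicative group of a division ring D is a torsion group, then D is commutative (a field). -/
/-!
Herstein's argument. Since `2` has finite order, `D` has characteristic `p > 0`, so a finite
multiplicative subgroup of `D` spans a finite subring, which is a field by Wedderburn's little
theorem. If `a` does not commute with some `b`, then `K = 𝔽ₚ[a]` is a finite field with `q`
elements and `δ = ad a` is a nonzero `K`-linear map with
`δ ^ q = (L_a - R_a) ^ q = L_a ^ q - R_a ^ q = δ`. As `X ^ q - X = ∏ c ∈ K, (X - c)`, `δ` has an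
eigenvector `w` with eigenvalue `c ≠ 0`, that is `w a w⁻¹ = a - c ∈ K`. Conjugation by `w` thus
normalizes `Kˣ`, so `Kˣ` and `w` generate a finite group; its elements commute, whereas
`w a w⁻¹ ≠ a`.
-/

open Polynomial

theorem FiniteField.prod_X_sub_C_eq_X_pow_card_sub_X (K : Type*) [Field K] [Fintype K] :
    ∏ c : K, (X - C c) = X ^ Fintype.card K - X := by
  have hmonic : (X ^ Fintype.card K - X : K[X]).Monic :=
    monic_X_pow_sub (degree_X_le.trans_lt (by exact_mod_cast Fintype.one_lt_card))
  have hcard : Multiset.card (X ^ Fintype.card K - X : K[X]).roots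
      = (X ^ Fintype.card K - X : K[X]).natDegree := by
    rw [roots_X_pow_card_sub_X, X_pow_card_sub_X_natDegree_eq K Fintype.one_lt_card]
    rfl
  simpa [roots_X_pow_card_sub_X] using prod_multiset_X_sub_C_of_monic_of_roots_card_eq hmonic hcard

namespace Module.End

variable {R M : Type*} [CommRing R] [AddCommGroup M] [Module R M]

theorem exists_hasEigenvector_of_aeval_prod_X_sub_C_apply_eq_zero (f : End R M) (s : Finset R)
    {v : M} (hv : v ≠ 0) (h : aeval f (∏ c ∈ s, (X - C c)) v = 0) :
    ∃ c ∈ s, ∃ w, f.HasEigenvector c w := by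
  classical
  induction s using Finset.induction generalizing v with
  | empty => simp_all
  | insert c s hcs ih =>
    rw [Finset.prod_insert hcs, aeval_mul, mul_apply] at h
    by_cases hw : aeval f (∏ c ∈ s, (X - C c)) v = 0
    · obtain ⟨d, hd, w, hw⟩ := ih hv hw
      exact ⟨d, Finset.mem_insert_of_mem hd, w, hw⟩
    · refine ⟨c, Finset.mem_insert_self c s, _, hasEigenvector_iff.2 ⟨?_, hw⟩⟩
      rw [mem_eigenspace_iff, ← sub_eq_zero]
      simpa [Algebra.algebraMap_eq_smul_one] using h

theorem exists_hasEigenvector_ne_zero_of_pow_card_eq_self {K : Type*} [Field K] [Fintype K]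
    [Module K M] (f : End K M) (hf : f ^ Fintype.card K = f) (hf0 : f ≠ 0) :
    ∃ c ≠ 0, ∃ w, f.HasEigenvector c w := by
  classical
  obtain ⟨x, hx⟩ : ∃ x, f x ≠ 0 := by
    by_contra! h
    exact hf0 (LinearMap.ext h)
  have hprod : aeval f (∏ c ∈ Finset.univ.erase (0 : K), (X - C c)) (f x) = 0 := by
    have := FiniteField.prod_X_sub_C_eq_X_pow_card_sub_X K
    rw [← Finset.mul_prod_erase _ _ (Finset.mem_univ (0 : K)), C_0, sub_zero, mul_comm] at this
    simpa [hf] using congr($(congrArg (aeval f) this) x)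
  obtain ⟨c, hc, w, hw⟩ := exists_hasEigenvector_of_aeval_prod_X_sub_C_apply_eq_zero f _ hx hprod
  exact ⟨c, Finset.ne_of_mem_erase hc, w, hw⟩

end Module.End

theorem Subring.finite_closure {R : Type*} [Ring R] (hR : IsAddTorsion R) {s : Set R}
    (hs : (Submonoid.closure s : Set R).Finite) : (Subring.closure s : Set R).Finite := by
  have hcarrier :
      (Subring.closure s : Set R) = AddSubgroup.closure (Submonoid.closure s : Set R) :=
    Set.ext fun _ => Subring.mem_closure_iff
  have := hs.to_subtype
  have := AddCommGroup.finite_of_fg_isAddTorsion _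
    (hR.addSubgroup (AddSubgroup.closure (Submonoid.closure s : Set R)))
  rw [hcarrier]
  exact Set.toFinite _

theorem Subring.units_conj_mem_closure {R : Type*} [Ring R] {s : Set R} {v : Rˣ}
    (hv : ∀ x ∈ s, (v * x * v⁻¹ : R) ∈ closure s) {x : R} (hx : x ∈ closure s) :
    (v * x * v⁻¹ : R) ∈ closure s :=
  closure_le (t := (closure s).comap (MulSemiringAction.toRingHom _ R (ConjAct.toConjAct v))).2
    hv hx

theorem Submonoid.finite_units {M : Type*} [Monoid M] {S : Submonoid M}
    (hS : (S : Set M).Finite) : (S.units : Set Mˣ).Finite :=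
  (hS.preimage Units.val_injective.injOn).subset fun _ hu => hu.1

theorem Submonoid.mem_normalizer_units {M : Type*} [Monoid M] {S : Submonoid M}
    (hS : (S : Set M).Finite) {v : Mˣ} (hv : ∀ x ∈ S, (v * x * v⁻¹ : M) ∈ S) :
    v ∈ Subgroup.normalizer (S.units : Set Mˣ) :=
  have := (finite_units hS).to_subtype
  Subgroup.mem_normalizer_fintype fun u hu => by
    rw [SetLike.mem_coe, mem_units_iff] at hu ⊢
    simpa [mul_assoc] using And.intro (hv _ hu.1) (hv _ hu.2)

theorem Subgroup.finite_sup_zpowers {G : Type*} [Group G] {N : Subgroup G}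
    (hN : (N : Set G).Finite) {g : G} (hg : IsOfFinOrder g) (hgN : g ∈ normalizer (N : Set G)) :
    ((N ⊔ zpowers g : Subgroup G) : Set G).Finite := by
  rw [coe_mul_of_right_le_normalizer_left N _ (zpowers_le.2 hgN)]
  exact hN.mul hg.finite_zpowers

section DivisionRing

variable {D : Type*} [DivisionRing D]

theorem isAddTorsion_of_isMulTorsion_units (h : IsMulTorsion Dˣ) : IsAddTorsion D := by
  have hchar : ringChar D ≠ 0 := by
    intro h0
    have : CharP D 0 := h0 ▸ ringChar.charP D
    have := CharP.charP_to_charZero D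
    obtain ⟨n, hn, h2n⟩ := isOfFinOrder_iff_pow_eq_one.1 (h (Units.mk0 2 two_ne_zero))
    have : ((2 ^ n : ℕ) : D) = 1 := by simpa [Units.ext_iff] using h2n
    rw [Nat.cast_eq_one, Nat.pow_eq_one] at this
    omega
  intro x
  exact isOfFinAddOrder_iff_nsmul_eq_zero.2
    ⟨_, Nat.pos_of_ne_zero hchar, by simp [nsmul_eq_mul]⟩

theorem Subring.inv_mem_of_finite {K : Subring D} [Finite K] {x : D} (hx : x ∈ K) : x⁻¹ ∈ K := by
  obtain rfl | hx0 := eq_or_ne x 0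
  · rw [inv_zero]
    exact K.zero_mem
  obtain ⟨y, hy⟩ :=
    (Finite.isDomain_to_isField K).mul_inv_cancel (a := ⟨x, hx⟩) (by simpa using hx0)
  simpa [eq_inv_of_mul_eq_one_right (congrArg Subtype.val hy)] using y.2

theorem commute_of_mem_finite_subgroup_units (hD : IsAddTorsion D) {G : Subgroup Dˣ}
    (hG : (G : Set Dˣ).Finite) {x y : Dˣ} (hx : x ∈ G) (hy : y ∈ G) : Commute x y := by
  set M := G.toSubmonoid.map (Units.coeHom D)
  have hfin : (Subring.closure (M : Set D) : Set D).Finite :=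
    Subring.finite_closure hD (by rw [Submonoid.closure_eq]; exact hG.image _)
  have := hfin.to_subtype
  have hmem {z : Dˣ} (hz : z ∈ G) : (z : D) ∈ Subring.closure (M : Set D) :=
    Subring.subset_closure ⟨z, hz, rfl⟩
  have := (Finite.isDomain_to_isField (Subring.closure (M : Set D))).mul_comm
    ⟨x, hmem hx⟩ ⟨y, hmem hy⟩
  exact Commute.units_val_iff.1 (congrArg Subtype.val this)

theorem exists_conj_mem_ne_of_not_commute {K : Subring D} [Finite K] {a : D} (ha : a ∈ K)
    {b : D} (hab : ¬Commute a b) : ∃ v : Dˣ, (v * a * v⁻¹ : D) ∈ K ∧ (v * a * v⁻¹ : D) ≠ a := by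
  have hK := Finite.isDomain_to_isField K
  let := hK.toField
  have := Fintype.ofFinite K
  have hcomm (k : K) : a * k = k * a := congrArg Subtype.val (hK.mul_comm ⟨a, ha⟩ k)
  let L : Module.End K D :=
    { toFun := (a * ·)
      map_add' := mul_add a
      map_smul' k x := by simp [Subring.smul_def, ← mul_assoc, hcomm] }
  let R : Module.End K D := LinearMap.mulRight K a
  have : CharP (Module.End K D) (ringChar D) :=
    charP_of_injective_algebraMap (A := Module.End K D)
      (fun (k l : K) h => Subtype.ext (by simpa using LinearMap.congr_fun h 1)) _
  obtain ⟨n, hp, hcard⟩ := FiniteField.card K (ringChar D)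
  have := Fact.mk hp
  have haq : a ^ Fintype.card K = a := congrArg Subtype.val (FiniteField.pow_card (⟨a, ha⟩ : K))
  have hpow : (L - R) ^ Fintype.card K = L - R := by
    rw [hcard, sub_pow_char_pow_of_commute _ _ (LinearMap.ext fun x => (mul_assoc a x a).symm),
      ← hcard]
    ext x
    simp [L, R, Module.End.pow_apply, mul_left_iterate, haq]
  have hne : L - R ≠ 0 := fun h => hab (sub_eq_zero.1 congr($h b))
  obtain ⟨c, hc, w, hw⟩ := Module.End.exists_hasEigenvector_ne_zero_of_pow_card_eq_self _ hpow hne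
  obtain ⟨hw, hw0⟩ := Module.End.hasEigenvector_iff.1 hw
  have hconj : w * a * w⁻¹ = a - c := by
    have hw : a * w - w * a = c * w := Module.End.mem_eigenspace_iff.1 hw
    rw [← sub_sub_cancel (a * w) (w * a), hw, ← sub_mul, mul_inv_cancel_right₀ hw0]
  refine ⟨Units.mk0 w hw0, ?_, ?_⟩
  · simpa [hconj] using K.sub_mem ha c.2
  · simpa [hconj] using hc

end DivisionRing

/-- If the multiplicative group of a division ring is torsion, then the
division ring is commutative. -/
theorem comm_of_torsion_units (D : Type*) [DivisionRing D]
    (h : ∀ x : Dˣ, IsOfFinOrder x) :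
    ∀ a b : D, a * b = b * a := by
  have hD := isAddTorsion_of_isMulTorsion_units h
  intro a b
  by_contra hab
  have ha0 : a ≠ 0 := by rintro rfl; simp at hab
  let K := Subring.closure {a}
  have hK : (K : Set D).Finite := Subring.finite_closure hD <| by
    rw [← Submonoid.powers_eq_closure]
    exact (Units.isOfFinOrder_val.2 (h (Units.mk0 a ha0))).finite_powers
  have := hK.to_subtype
  have haK : a ∈ K := Subring.mem_closure_of_mem rfl
  obtain ⟨v, hvK, hva⟩ := exists_conj_mem_ne_of_not_commute haK hab
  have hvN := Submonoid.mem_normalizer_units hK fun x hx =>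
    Subring.units_conj_mem_closure (by simpa using hvK) hx
  have hcomm := commute_of_mem_finite_subgroup_units hD
    (Subgroup.finite_sup_zpowers (Submonoid.finite_units hK) (h v) hvN)
    (Subgroup.mem_sup_left (x := Units.mk0 a ha0) ⟨haK, Subring.inv_mem_of_finite haK⟩)
    (Subgroup.mem_sup_right (Subgroup.mem_zpowers v))
  have hav : a * v = v * a := Commute.units_val_iff.2 hcomm
  exact hva (by rw [← hav, Units.mul_inv_cancel_right])
end

section
/- If D is a division ring and G is a nilpotent normal subgroup of D*, then G is contained in the center of D. -/
/-!
Going up the upper central series, it suffices to show that an element `a` of `D` is central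
as soon as `a b = z b a` with `z` central for every conjugate `b` of `a`. If `a` is not central,
some conjugate `b` does not commute with `a` (otherwise `a` commutes with all its conjugates,
and Brauer's argument with the conjugates by `d` and `d + 1` makes it central). Applying the
hypothesis to the conjugate of `a` by `1 + b` gives a quadratic relation for `b` over the centre;
conjugation by `a` rescales `b` by `z`, and comparing the two relations forces `z = -1` and
`b² = -1`. The same holds for `(1 + a) b`, which also anticommutes with `a` but squares to
`a² - 1`, whence `a = 0`.
-/

section DivisionRing

variable {D : Type*} [DivisionRing D]

theorem conj_sub_self {x : D} (hx : x ≠ 0) (a : D) :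
    x * a * x⁻¹ - a = (x * a - a * x) * x⁻¹ := by
  rw [sub_mul, mul_inv_cancel_right₀ hx]

theorem mem_center_of_forall_commute_conj {a : D}
    (h : ∀ x : D, x ≠ 0 → Commute a (x * a * x⁻¹)) : a ∈ Subring.center D := by
  rw [Subring.mem_center_iff]
  intro d
  by_contra hda
  have hd : d ≠ 0 := by rintro rfl; simp at hda
  have hd1 : d + 1 ≠ 0 := by
    intro h1; rw [eq_neg_of_add_eq_zero_left h1] at hda; simp at hda
  set e := d * a - a * d
  have he : e ≠ 0 := sub_ne_zero.mpr hda
  have hu : Commute a (e * d⁻¹) := by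
    rw [← conj_sub_self hd]; exact (h d hd).sub_right (Commute.refl a)
  have hv : Commute a (e * (d + 1)⁻¹) := by
    have : e = (d + 1) * a - a * (d + 1) := by simp only [e]; noncomm_ring
    rw [this, ← conj_sub_self hd1]; exact (h _ hd1).sub_right (Commute.refl a)
  have hq : Commute a (d * (d + 1)⁻¹) := by
    have : (e * d⁻¹)⁻¹ * (e * (d + 1)⁻¹) = d * (d + 1)⁻¹ := by
      rw [mul_inv_rev, inv_inv, mul_assoc, inv_mul_cancel_left₀ he]
    rw [← this]; exact hu.inv_right₀.mul_right hv
  have hinv : Commute a (d + 1)⁻¹ := by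
    have : 1 - d * (d + 1)⁻¹ = (d + 1)⁻¹ := by
      calc 1 - d * (d + 1)⁻¹ = (d + 1 - d) * (d + 1)⁻¹ := by
            rw [sub_mul, mul_inv_cancel₀ hd1]
        _ = (d + 1)⁻¹ := by rw [add_sub_cancel_left, one_mul]
    rw [← this]; exact (Commute.one_right a).sub_right hq
  have : Commute a d := by simpa using hinv.inv_right₀.sub_right (Commute.one_right a)
  exact hda this.eq.symm

theorem mul_inv_eq_inv_mul_of_mul_eq_mul {a p q : D} (hp : p ≠ 0) (hq : q ≠ 0)
    (h : a * p = q * a) : a * p⁻¹ = q⁻¹ * a := by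
  rw [mul_inv_eq_iff_eq_mul₀ hp, mul_assoc, eq_inv_mul_iff_mul_eq₀ hq, h]

end DivisionRing

theorem eq_neg_one_and_eq_neg_one_of_coeffs_vanish {K : Type*} [Field K] {z μ : K}
    (hz0 : z ≠ 0) (hz1 : z ≠ 1) (hB : (2 * z - μ * (1 + z ^ 2)) * (z ^ 2 - z) = 0)
    (hC : (1 - μ) * (z ^ 2 - 1) = 0) : z = -1 ∧ μ = -1 := by
  have hB' : 2 * z - μ * (1 + z ^ 2) = 0 := by
    refine (mul_eq_zero.mp hB).resolve_right ?_
    rw [sq, ← mul_sub_one]; exact mul_ne_zero hz0 (sub_ne_zero.mpr hz1)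
  have hμ : μ ≠ 1 := by
    rintro rfl
    apply hz1
    have : (z - 1) ^ 2 = 0 := by linear_combination -hB'
    exact sub_eq_zero.mp (pow_eq_zero_iff two_ne_zero |>.mp this)
  obtain rfl : z = -1 := by
    have h := (mul_eq_zero.mp hC).resolve_left (sub_ne_zero.mpr (Ne.symm hμ))
    have : (z - 1) * (z + 1) = 0 := by linear_combination h
    exact eq_neg_of_add_eq_zero_left ((mul_eq_zero.mp this).resolve_left (sub_ne_zero.mpr hz1))
  have h2 : (2 : K) ≠ 0 := fun h => hz1 (by linear_combination -h)
  have : 2 * (μ + 1) = 0 := by linear_combination -hB'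
  exact ⟨rfl, eq_neg_of_add_eq_zero_left ((mul_eq_zero.mp this).resolve_left h2)⟩

section Algebra

variable {F D : Type*} [Field F] [DivisionRing D] [Algebra F D]

theorem mul_self_eq_smul_mul_of_mul_conj {a p q r : D} {μ : F} (ha : a ≠ 0) (hp : p ≠ 0)
    (hpq : a * p = q * a) (hqr : a * q = r * a) (hcomm : Commute p q)
    (h : a * (p * a * p⁻¹) = μ • (p * a * p⁻¹ * a)) : q * q = μ • (p * r) := by
  have hq : q ≠ 0 := by rintro rfl; simp [ha, hp] at hpq
  have hr : r ≠ 0 := by rintro rfl; simp [ha, hq] at hqr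
  have hp' := mul_inv_eq_inv_mul_of_mul_eq_mul hp hq hpq
  have hq' := mul_inv_eq_inv_mul_of_mul_eq_mul hq hr hqr
  have key : q * r⁻¹ = μ • (p * q⁻¹) := by
    apply mul_right_cancel₀ (mul_ne_zero ha ha)
    calc q * r⁻¹ * (a * a) = q * (a * q⁻¹) * a := by rw [hq']; simp only [mul_assoc]
      _ = a * p * (a * p⁻¹) := by rw [hpq, hp']; simp only [mul_assoc]
      _ = μ • (p * a * p⁻¹ * a) := by rw [← h]; simp only [mul_assoc]
      _ = μ • (p * q⁻¹) * (a * a) := by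
        rw [smul_mul_assoc, mul_assoc p, hp']; simp only [mul_assoc]
  calc q * q = q * (q * r⁻¹) * r := by rw [mul_assoc q, inv_mul_cancel_right₀ hr]
    _ = μ • (p * r) := by
      rw [key, mul_smul_comm, smul_mul_assoc, ← mul_assoc, ← hcomm.eq,
        mul_inv_cancel_right₀ hq]

theorem coeffs_eq_zero_of_not_commute {a y : D} (hy : ¬Commute a y) {u v : F}
    (h : u • y + v • (1 : D) = 0) : u = 0 ∧ v = 0 := by
  obtain rfl : u = 0 := by
    by_contra hu
    apply hy
    rw [← inv_smul_smul₀ hu y, eq_neg_of_add_eq_zero_left h, smul_neg, smul_smul]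
    exact ((Commute.one_right a).smul_right _).neg_right
  simpa using h

theorem eq_neg_one_and_mul_self_eq_neg_one_of_mul_eq_smul_mul {a y : D} {z : F}
    (ha : a ≠ 0) (hy : y ≠ 0) (hz : z ≠ 1)
    (H : ∀ x : D, x ≠ 0 → ∃ μ : F, a * (x * a * x⁻¹) = μ • (x * a * x⁻¹ * a))
    (hay : a * y = z • (y * a)) : z = -1 ∧ y * y = -1 := by
  have hcomm : ¬Commute a y := fun h => by
    have : (1 - z) • (y * a) = 0 := by rw [sub_smul, one_smul, ← hay, h.eq, sub_self]
    rcases smul_eq_zero.mp this with h1 | h0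
    · exact hz (sub_eq_zero.mp h1).symm
    · exact mul_ne_zero hy ha h0
  have hz0 : z ≠ 0 := by rintro rfl; simp [ha, hy] at hay
  have hp : 1 + y ≠ 0 := fun h => hcomm <| by
    rw [eq_neg_of_add_eq_zero_right h]; exact (Commute.one_right a).neg_right
  obtain ⟨μ, hμ⟩ := H (1 + y) hp
  have htwist : ∀ c : F, a * (1 + c • y) = (1 + (c * z) • y) * a := fun c => by
    rw [mul_add, mul_one, mul_smul_comm, hay, add_mul, one_mul, smul_smul, smul_mul_assoc]
  have hcomm_pq : Commute (1 + y) (1 + z • y) :=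
    (Commute.one_right _).add_right (((Commute.one_left y).add_left (Commute.refl y)).smul_right z)
  have hsq := mul_self_eq_smul_mul_of_mul_conj (q := 1 + z • y) (r := 1 + (z * z) • y) ha hp
    (by simpa using htwist 1) (htwist z) hcomm_pq hμ
  have hE : ((1 - μ) * z ^ 2) • (y * y) + (2 * z - μ * (1 + z ^ 2)) • y
      + (1 - μ) • (1 : D) = 0 := by
    simp only [add_mul, mul_add, one_mul, mul_one, smul_mul_assoc, mul_smul_comm, smul_smul,
      smul_add] at hsq
    linear_combination (norm := module) hsq
  have hayy : a * (y * y) = (z * z) • (y * y * a) := by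
    rw [← mul_assoc, hay, smul_mul_assoc, mul_assoc, hay, mul_smul_comm, smul_smul, mul_assoc]
  have hE' : ((1 - μ) * z ^ 2 * z ^ 2) • (y * y) + ((2 * z - μ * (1 + z ^ 2)) * z) • y
      + (1 - μ) • (1 : D) = 0 := by
    refine mul_right_cancel₀ ha ?_
    rw [zero_mul, ← mul_zero a, ← hE]
    simp only [add_mul, mul_add, smul_mul_assoc, mul_smul_comm, one_mul, mul_one, hay, hayy]
    module
  obtain ⟨hB, hC⟩ := coeffs_eq_zero_of_not_commute hcomm
    (u := (2 * z - μ * (1 + z ^ 2)) * (z ^ 2 - z)) (v := (1 - μ) * (z ^ 2 - 1))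
    (by linear_combination (norm := module) (z ^ 2) • hE - hE')
  obtain ⟨rfl, rfl⟩ := eq_neg_one_and_eq_neg_one_of_coeffs_vanish hz0 hz hB hC
  have h2 : (2 : F) ≠ 0 := fun h => hz (by linear_combination -h)
  have : (2 : F) • (y * y + 1) = 0 := by linear_combination (norm := module) hE
  exact ⟨rfl, eq_neg_of_add_eq_zero_left ((smul_eq_zero.mp this).resolve_left h2)⟩

theorem mem_center_of_forall_mul_conj_eq_smul {a : D}
    (H : ∀ x : D, x ≠ 0 → ∃ μ : F, a * (x * a * x⁻¹) = μ • (x * a * x⁻¹ * a)) :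
    a ∈ Subring.center D := by
  by_contra hcen
  have ha : a ≠ 0 := by rintro rfl; exact hcen (Subring.zero_mem _)
  obtain ⟨x, hx, hab⟩ : ∃ x : D, x ≠ 0 ∧ ¬Commute a (x * a * x⁻¹) := by
    by_contra! h
    exact hcen (mem_center_of_forall_commute_conj h)
  obtain ⟨z, hz⟩ := H x hx
  set b := x * a * x⁻¹
  have hb : b ≠ 0 := by simp [b, hx, ha]
  have hz1 : z ≠ 1 := by rintro rfl; exact hab (by rwa [one_smul] at hz)
  obtain ⟨rfl, hbb⟩ := eq_neg_one_and_mul_self_eq_neg_one_of_mul_eq_smul_mul ha hb hz1 H hz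
  have h1a : 1 + a ≠ 0 := fun h => hcen <| by
    rw [eq_neg_of_add_eq_zero_right h]; exact neg_mem (Subring.one_mem _)
  have hab' : a * b = -(b * a) := by rwa [neg_one_smul] at hz
  have hba : b * (1 + a) = (1 - a) * b := by
    rw [mul_add, mul_one, sub_mul, one_mul, hab', sub_neg_eq_add]
  have haw : a * ((1 + a) * b) = (-1 : F) • ((1 + a) * b * a) := by
    rw [neg_one_smul, ← mul_assoc, ((Commute.one_right a).add_right (Commute.refl a)).eq,
      mul_assoc, hab']
    noncomm_ring
  obtain ⟨-, hww⟩ := eq_neg_one_and_mul_self_eq_neg_one_of_mul_eq_smul_mul ha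
    (mul_ne_zero h1a hb) hz1 H haw
  have : (1 + a) * b * ((1 + a) * b) = a * a - 1 := by
    calc (1 + a) * b * ((1 + a) * b) = (1 + a) * (b * (1 + a)) * b := by simp only [mul_assoc]
      _ = a * a - 1 := by rw [hba]; simp only [mul_assoc]; rw [hbb]; noncomm_ring
  rw [hww, eq_sub_iff_add_eq, neg_add_cancel, eq_comm, mul_self_eq_zero] at this
  exact ha this

end Algebra

theorem val_mem_center_of_mem_upperCentralSeries {D : Type*} [DivisionRing D] {G : Subgroup Dˣ}
    (hG : G.Normal) (m : ℕ) {k : G} (hk : k ∈ Subgroup.upperCentralSeries G m) :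
    ((k : Dˣ) : D) ∈ Subring.center D := by
  induction m generalizing k with
  | zero => simp [Subgroup.mem_bot.mp hk]
  | succ m ih =>
    refine mem_center_of_forall_mul_conj_eq_smul (F := Subring.center D) fun x hx => ?_
    let c : G := ⟨Units.mk0 x hx * k * (Units.mk0 x hx)⁻¹, hG.conj_mem _ k.2 _⟩
    have hkc : k * c = k * c * k⁻¹ * c⁻¹ * (c * k) := by group
    exact ⟨⟨_, ih (Subgroup.mem_upperCentralSeries_succ_iff.mp hk c)⟩,
      congrArg (fun u : G => ((u : Dˣ) : D)) hkc⟩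

/-- A nilpotent normal subgroup of the multiplicative group of a division ring
is contained in the center. -/
theorem nilpotent_normal_subgroup_central (D : Type*) [DivisionRing D]
    (G : Subgroup Dˣ) (hn : G.Normal) (hnil : Group.IsNilpotent G) :
    ∀ g ∈ G, (g : D) ∈ Subring.center D := by
  obtain ⟨n, hn_top⟩ := hnil.nilpotent'
  exact fun g hg => val_mem_center_of_mem_upperCentralSeries hn n (k := ⟨g, hg⟩)
    (hn_top ▸ Subgroup.mem_top _)
end

section
/- Cartan–Brauer–Hua theorem: if K is a division subring of a division ring D, K is stable under conjugation by all nonzero elements of D, and K ≠ D, then K is contained in the center of D. -/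
/-- Cartan–Brauer–Hua: a division subring of a division ring `D` which is
stable under conjugation by every nonzero element of `D` and is not all of
`D` is contained in the center of `D`. -/
theorem cartan_brauer_hua (D : Type*) [DivisionRing D] (K : Subring D)
    (hinv : ∀ x ∈ K, x⁻¹ ∈ K)
    (hconj : ∀ x : D, x ≠ 0 → ∀ k ∈ K, x * k * x⁻¹ ∈ K)
    (hne : K ≠ ⊤) :
    (K : Set D) ⊆ Subring.center D := by
  obtain ⟨x0, hx0⟩ : ∃ x : D, x ∉ K := by
    by_contra h
    push_neg at h
    exact hne ((Subring.eq_top_iff' K).mpr h)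
  intro a ha
  have key : ∀ x : D, x ∉ K → a * x = x * a := by
    intro x hx
    have hxne : x ≠ 0 := fun h => hx (h ▸ K.zero_mem)
    have hx1 : x + 1 ≠ 0 := by
      intro h
      apply hx
      rw [eq_neg_of_add_eq_zero_left h]
      exact K.neg_mem K.one_mem
    have hb := hconj x hxne a ha
    have hc := hconj (x + 1) hx1 a ha
    set b := x * a * x⁻¹ with hbdef
    set c := (x + 1) * a * (x + 1)⁻¹ with hcdef
    have hbx : b * x = x * a := by
      rw [hbdef, mul_assoc, inv_mul_cancel₀ hxne, mul_one]
    have hcx : c * (x + 1) = (x + 1) * a := by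
      rw [hcdef, mul_assoc, inv_mul_cancel₀ hx1, mul_one]
    have key2 : (c - b) * x = a - c := by
      rw [mul_add, mul_one, add_mul, one_mul] at hcx
      rw [sub_mul, hbx, eq_sub_of_add_eq hcx]
      abel
    by_cases hcb : c = b
    · have hac : a = c := by
        have h0 : a - c = 0 := by rw [← key2, hcb, sub_self, zero_mul]
        exact sub_eq_zero.mp h0
      rw [mul_add, mul_one, add_mul, one_mul, ← hac] at hcx
      exact add_right_cancel hcx
    · exfalso
      apply hx
      have hne' : c - b ≠ 0 := sub_ne_zero.mpr hcb
      have hxeq : x = (c - b)⁻¹ * (a - c) := by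
        rw [← key2, ← mul_assoc, inv_mul_cancel₀ hne', one_mul]
      rw [hxeq]
      exact K.mul_mem (hinv _ (K.sub_mem hc hb)) (K.sub_mem ha hc)
  rw [SetLike.mem_coe, Subring.mem_center_iff]
  intro y
  by_cases hy : y ∈ K
  · have hxy : x0 + y ∉ K := fun h => hx0 (by simpa using K.sub_mem h hy)
    have h1 := key x0 hx0
    have h2 := key (x0 + y) hxy
    rw [mul_add, add_mul] at h2
    rw [h1] at h2
    exact (add_left_cancel h2).symm
  · exact (key y hy).symm
end

section
/- Let D be a division ring with center F, let x ∈ D be algebraic over F satisfying a monic polynomial of degree n with coefficients in a division subring K containing F that is normalized by x. Then R = K + Kx + ... + Kx^{n-1} is a division subring of D. -/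
/-- Let `D` be a division ring with center `F`, `K` a division subring of `D`
containing `F` and normalized by `x`, and suppose `x` satisfies a monic
equation of degree `n` with coefficients in `K`.  Then
`R = K + Kx + ⋯ + Kx^(n-1)` is a division subring of `D` (a subring closed
under inverses), finite-dimensional as a left `K`-space by construction. -/
theorem span_powers_is_division_subring (D : Type*) [DivisionRing D]
    (K : Subring D) (hKinv : ∀ y ∈ K, y⁻¹ ∈ K)
    (hFK : (Subring.center D : Set D) ⊆ K)
    (x : D) (hx : x ≠ 0)
    (hconj : ∀ k ∈ K, x * k * x⁻¹ ∈ K) (hconj' : ∀ k ∈ K, x⁻¹ * k * x ∈ K)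
    (n : ℕ) (hn : 0 < n)
    (k : Fin n → D) (hk : ∀ i, k i ∈ K)
    (heq : x ^ n + ∑ i : Fin n, k i * x ^ (i : ℕ) = 0) :
    ∃ R : Subring D,
      (∀ y : D, y ∈ R ↔ ∃ c : Fin n → D, (∀ i, c i ∈ K) ∧
        y = ∑ i : Fin n, c i * x ^ (i : ℕ)) ∧
      ∀ y ∈ R, y⁻¹ ∈ R := by
  classical
  -- `K` is a division ring
  letI : DivisionRing ↥K :=
    { (inferInstance : Ring ↥K) with
      inv := fun y => ⟨(y : D)⁻¹, hKinv _ y.2⟩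
      mul_inv_cancel := fun a ha =>
        Subtype.ext (mul_inv_cancel₀ (fun h => ha (Subtype.ext h)))
      inv_zero := Subtype.ext inv_zero
      nnqsmul := _
      qsmul := _ }
  set f : Fin n → D := fun i => x ^ (i : ℕ) with hf
  set V : Submodule ↥K D := Submodule.span ↥K (Set.range f) with hV
  have hsmul : ∀ (c : ↥K) (d : D), c • d = (c : D) * d := fun c d => rfl
  have hgen : ∀ i : Fin n, x ^ (i : ℕ) ∈ V := fun i =>
    Submodule.subset_span ⟨i, rfl⟩
  -- conjugation lemma: powers of x normalize K
  have lemA : ∀ (j : ℕ) (c : D), c ∈ K → ∃ c' ∈ K, x ^ j * c = c' * x ^ j := by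
    intro j
    induction j with
    | zero => exact fun c hc => ⟨c, hc, by simp⟩
    | succ j ih =>
      intro c hc
      obtain ⟨c', hc', h⟩ := ih c hc
      refine ⟨x * c' * x⁻¹, hconj c' hc', ?_⟩
      have hxx : x * c' = (x * c' * x⁻¹) * x := by
        rw [mul_assoc, inv_mul_cancel₀ hx, mul_one]
      calc x ^ (j + 1) * c = x * (x ^ j * c) := by rw [pow_succ', mul_assoc]
        _ = x * (c' * x ^ j) := by rw [h]
        _ = (x * c') * x ^ j := by rw [mul_assoc]
        _ = ((x * c' * x⁻¹) * x) * x ^ j := by rw [← hxx]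
        _ = (x * c' * x⁻¹) * x ^ (j + 1) := by rw [mul_assoc, ← pow_succ']
  -- V is closed under right multiplication by K
  have lemB : ∀ v ∈ V, ∀ c ∈ K, v * c ∈ V := by
    intro v hv
    induction hv using Submodule.span_induction with
    | mem w hw =>
      obtain ⟨i, rfl⟩ := hw
      intro c hc
      obtain ⟨c', hc', h⟩ := lemA (i : ℕ) c hc
      show x ^ (i : ℕ) * c ∈ V
      rw [h, ← hsmul ⟨c', hc'⟩]
      exact V.smul_mem _ (hgen i)
    | zero => intro c hc; simpa using V.zero_mem
    | add a b ha hb iha ihb =>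
      intro c hc
      rw [add_mul]; exact V.add_mem (iha c hc) (ihb c hc)
    | smul a w hw ihw =>
      intro c hc
      rw [hsmul, mul_assoc, ← hsmul]
      exact V.smul_mem _ (ihw c hc)
  -- x^n is in V
  have hxn : x ^ n ∈ V := by
    have : x ^ n = -∑ i : Fin n, k i * x ^ (i : ℕ) := eq_neg_of_add_eq_zero_left heq
    rw [this]
    refine V.neg_mem (Submodule.sum_mem _ fun i _ => ?_)
    rw [← hsmul ⟨k i, hk i⟩]
    exact V.smul_mem _ (hgen i)
  -- V is closed under right multiplication by x
  have lemD : ∀ v ∈ V, v * x ∈ V := by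
    intro v hv
    induction hv using Submodule.span_induction with
    | mem w hw =>
      obtain ⟨i, rfl⟩ := hw
      show x ^ (i : ℕ) * x ∈ V
      rw [← pow_succ]
      rcases lt_or_eq_of_le (Nat.succ_le_of_lt i.2) with h | h
      · exact hgen ⟨(i : ℕ) + 1, h⟩
      · rw [show (i : ℕ) + 1 = n from h]; exact hxn
    | zero => simpa using V.zero_mem
    | add a b ha hb iha ihb => rw [add_mul]; exact V.add_mem iha ihb
    | smul a w hw ihw =>
      rw [hsmul, mul_assoc, ← hsmul]
      exact V.smul_mem _ ihw
  -- V is closed under right multiplication by powers of x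
  have lemD' : ∀ (m : ℕ), ∀ v ∈ V, v * x ^ m ∈ V := by
    intro m
    induction m with
    | zero => intro v hv; simpa using hv
    | succ m ih =>
      intro v hv
      rw [pow_succ, ← mul_assoc]
      exact lemD _ (ih v hv)
  -- V is closed under multiplication
  have hmul : ∀ w ∈ V, ∀ v ∈ V, v * w ∈ V := by
    intro w hw
    induction hw using Submodule.span_induction with
    | mem w hw =>
      obtain ⟨i, rfl⟩ := hw
      exact fun v hv => lemD' (i : ℕ) v hv
    | zero => intro v hv; simpa using V.zero_mem
    | add a b ha hb iha ihb =>
      intro v hv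
      rw [mul_add]; exact V.add_mem (iha v hv) (ihb v hv)
    | smul a w hw ihw =>
      intro v hv
      rw [hsmul, ← mul_assoc]
      exact ihw _ (lemB v hv _ a.2)
  have hone : (1 : D) ∈ V := by
    have := hgen ⟨0, hn⟩
    simpa using this
  -- the subring
  refine ⟨{ carrier := (V : Set D)
            one_mem' := hone
            mul_mem' := fun {a b} ha hb => hmul b hb a ha
            zero_mem' := V.zero_mem
            add_mem' := fun {a b} ha hb => V.add_mem ha hb
            neg_mem' := fun {a} ha => V.neg_mem ha }, ?_, ?_⟩
  · intro y
    constructor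
    · intro hy
      have hy' : y ∈ V := hy
      rw [hV, Submodule.mem_span_range_iff_exists_fun] at hy'
      obtain ⟨c, hc⟩ := hy'
      exact ⟨fun i => (c i : D), fun i => (c i).2, by
        rw [← hc]; exact (Finset.sum_congr rfl fun i _ => (hsmul (c i) (f i))).symm⟩
    · rintro ⟨c, hc, rfl⟩
      show ∑ i : Fin n, c i * x ^ (i : ℕ) ∈ V
      refine Submodule.sum_mem _ fun i _ => ?_
      rw [← hsmul ⟨c i, hc i⟩]
      exact V.smul_mem _ (hgen i)
  · intro y hy
    rcases eq_or_ne y 0 with rfl | hy0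
    · show (0:D)⁻¹ ∈ V
      rw [inv_zero]; exact V.zero_mem
    have hyV : y ∈ V := hy
    haveI : FiniteDimensional ↥K ↥V :=
      FiniteDimensional.span_of_finite ↥K (Set.finite_range f)
    let φ : V →ₗ[↥K] V :=
      { toFun := fun r => ⟨(r : D) * y, hmul y hyV r r.2⟩
        map_add' := fun a b => Subtype.ext (add_mul _ _ _)
        map_smul' := fun c a => Subtype.ext (mul_assoc (c : D) (a : D) y) }
      -- injective hence surjective
    have hinj : Function.Injective φ := by
      intro a b hab
      have : (a : D) * y = (b : D) * y := congrArg Subtype.val hab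
      exact Subtype.ext (mul_right_cancel₀ hy0 this)
    obtain ⟨z, hz⟩ := (LinearMap.injective_iff_surjective.mp hinj) ⟨1, hone⟩
    have hzy : (z : D) * y = 1 := congrArg Subtype.val hz
    have : y⁻¹ = (z : D) := inv_eq_of_mul_eq_one_left hzy
    rw [this]
    exact z.2
end

section
/- If a group G has an abelian normal subgroup A of finite index, then the group algebra F[G] over any field F satisfies a polynomial identity. -/
/-!
Let `n = [G : A]`. Acting by right multiplication, the commutative ring `k[A]` makes `k[G]` a free
module with a basis indexed by `G ⧸ A`, and left multiplication commutes with this action, so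
`k[G]` embeds into `End_{k[A]} k[G] ≅ Matrix (G ⧸ A) (G ⧸ A) k[A]`. Over a commutative ring the
standard polynomial `s_m = ∑ sign σ • x_{σ 0} ⋯ x_{σ (m-1)}` is multilinear and alternating, hence
vanishes on any algebra spanned by fewer than `m` elements; thus `k[G]` satisfies `s_{n²+1}`.
Finally `s_m` is nonzero in the free algebra, its monomials being distinct words.
-/

open Equiv

open scoped MonoidAlgebra IsMulCommutative

section AlternatingProd

variable {R S : Type*} [Ring R] [Ring S] {m : ℕ}

/-- The standard polynomial `s_m` evaluated at `x`. -/
noncomputable def alternatingProd (x : Fin m → R) : R :=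
  ∑ σ : Perm (Fin m), Perm.sign σ • (List.ofFn (x ∘ σ)).prod

theorem map_alternatingProd {H : Type*} [FunLike H R S] [RingHomClass H R S] (f : H)
    (x : Fin m → R) : f (alternatingProd x) = alternatingProd (f ∘ x) := by
  simp only [alternatingProd, map_sum, Units.smul_def, map_zsmul, map_list_prod, List.map_ofFn]
  rfl

theorem alternatingProd_eq_zero_of_injective {f : R →+* S} (hf : Function.Injective f)
    (hS : ∀ y : Fin m → S, alternatingProd y = 0) (x : Fin m → R) : alternatingProd x = 0 :=
  hf <| by rw [map_alternatingProd, hS, map_zero]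

theorem alternatingProd_eq_alternatization (C : Type*) [CommRing C] [Algebra C R]
    (x : Fin m → R) :
    alternatingProd x = (MultilinearMap.mkPiAlgebraFin C m R).alternatization x := by
  simp only [alternatingProd, MultilinearMap.alternatization_apply,
    MultilinearMap.domDomCongr_apply, MultilinearMap.mkPiAlgebraFin_apply]
  rfl

theorem alternatingProd_eq_zero_of_card_lt {C ι : Type*} [CommRing C] [Algebra C R] [Fintype ι]
    (b : Module.Basis ι C R) (hm : Fintype.card ι < m) (x : Fin m → R) :
    alternatingProd x = 0 := by
  have : (MultilinearMap.mkPiAlgebraFin C m R).alternatization = 0 :=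
    b.ext_alternating fun v hv => absurd (Fintype.card_le_of_injective v hv) (by simpa using hm)
  rw [alternatingProd_eq_alternatization C, this, AlternatingMap.zero_apply]

theorem Matrix.alternatingProd_eq_zero {C n : Type*} [CommRing C] [Fintype n] [DecidableEq n]
    (hm : Fintype.card n ^ 2 < m) (x : Fin m → Matrix n n C) : alternatingProd x = 0 :=
  alternatingProd_eq_zero_of_card_lt (Matrix.stdBasis C n n) (by simpa [sq] using hm) x

theorem alternatingProd_eq_zero_of_basis {C ι : Type*} [CommRing C] [Module C R]
    [SMulCommClass R C R] [Fintype ι] (b : Module.Basis ι C R) (hm : Fintype.card ι ^ 2 < m)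
    (x : Fin m → R) : alternatingProd x = 0 := by
  classical
  have hinj : Function.Injective (Module.toModuleEnd C (S := R) R) := fun r s h => by
    simpa using LinearMap.congr_fun h 1
  exact alternatingProd_eq_zero_of_injective
    (f := (algEquivMatrix b).toRingHom.comp (Module.toModuleEnd C R))
    ((algEquivMatrix b).injective.comp hinj) (Matrix.alternatingProd_eq_zero hm) x

end AlternatingProd

theorem FreeMonoid.prod_map_of {α : Type*} (l : List α) :
    (l.map FreeMonoid.of).prod = FreeMonoid.ofList l := by
  induction l with
  | nil => rfl
  | cons a l ih => rw [List.map_cons, List.prod_cons, ih]; rfl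

theorem FreeAlgebra.alternatingProd_ι_ne_zero (R : Type*) [CommRing R] [Nontrivial R] (m : ℕ) :
    alternatingProd (FreeAlgebra.ι R : Fin m → FreeAlgebra R (Fin m)) ≠ 0 := by
  classical
  set x : Fin m → R[FreeMonoid (Fin m)] := MonoidAlgebra.of R _ ∘ FreeMonoid.of
  have hword (σ : Perm (Fin m)) :
      (List.ofFn (x ∘ σ)).prod = MonoidAlgebra.single (FreeMonoid.ofList (List.ofFn σ)) 1 := by
    rw [← List.map_ofFn, ← List.map_map, ← map_list_prod, FreeMonoid.prod_map_of]
    rfl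
  have hinj : Function.Injective fun σ : Perm (Fin m) => FreeMonoid.ofList (List.ofFn σ) :=
    fun σ τ h => DFunLike.coe_injective (List.ofFn_injective (FreeMonoid.ofList.injective h))
  have hcoeff :
      (alternatingProd x).coeff (FreeMonoid.ofList (List.ofFn (1 : Perm (Fin m)))) = 1 := by
    simp only [alternatingProd, hword, MonoidAlgebra.coeff_sum, Finsupp.finsetSum_apply,
      MonoidAlgebra.coeff_smul_apply, MonoidAlgebra.coeff_single, Finsupp.single_apply,
      hinj.eq_iff]
    simp
  intro h
  have h' := congrArg (FreeAlgebra.lift R x) h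
  rw [map_alternatingProd, map_zero,
    show ⇑(FreeAlgebra.lift R x) ∘ ι R = x from funext (FreeAlgebra.lift_ι_apply x)] at h'
  simp [h'] at hcoeff

noncomputable def Subgroup.quotientProdEquiv {G : Type*} [Group G] (A : Subgroup G) :
    (G ⧸ A) × A ≃ G where
  toFun p := p.1.out * p.2
  invFun g := (g, ⟨(g : G ⧸ A).out⁻¹ * g,
    QuotientGroup.leftRel_apply.mp (Quotient.exact (g : G ⧸ A).out_eq)⟩)
  left_inv := fun ⟨q, a⟩ => by
    have hq : ((q.out * a : G) : G ⧸ A) = q := by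
      rw [QuotientGroup.mk_mul_of_mem _ a.2, QuotientGroup.out_eq']
    ext <;> simp [hq]
  right_inv g := by simp

namespace MonoidAlgebra

variable (k : Type*) [CommRing k] {G : Type*} [Group G] (A : Subgroup G)

noncomputable def cosetRepr : k[G] ≃ₗ[k] (G ⧸ A →₀ k[A]) :=
  coeffLinearEquiv k ≪≫ₗ Finsupp.domLCongr A.quotientProdEquiv.symm ≪≫ₗ
    Finsupp.curryLinearEquiv k ≪≫ₗ Finsupp.mapRange.linearEquiv (coeffLinearEquiv k).symm

theorem cosetRepr_symm_single (q : G ⧸ A) (a : A) (r : k) :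
    (cosetRepr k A).symm (Finsupp.single q (single a r)) = single (q.out * a) r := by
  simp [cosetRepr, Finsupp.curryLinearEquiv, Subgroup.quotientProdEquiv]

variable [IsMulCommutative A]

noncomputable abbrev subgroupRightModule : Module k[A] k[G] :=
  Module.compHom k[G] ((mapDomainRingHom k A.subtype).toOpposite fun x y => by
    rw [Commute, SemiconjBy, ← map_mul, ← map_mul, mul_comm])

section RightModule

attribute [local instance] subgroupRightModule

theorem subgroupRightModule_smul (c : k[A]) (x : k[G]) :
    c • x = x * mapDomainRingHom k A.subtype c :=
  rfl

theorem subgroupRightModule_smulCommClass : SMulCommClass k[G] k[A] k[G] :=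
  ⟨fun r c x => by simp only [subgroupRightModule_smul, smul_eq_mul, mul_assoc]⟩

attribute [local instance] subgroupRightModule_smulCommClass

theorem cosetRepr_symm_smul (c : k[A]) (y : G ⧸ A →₀ k[A]) :
    (cosetRepr k A).symm (c • y) = c • (cosetRepr k A).symm y := by
  induction y using Finsupp.induction_linear with
  | zero => simp only [smul_zero, map_zero]
  | add y z hy hz => simp only [smul_add, map_add, hy, hz]
  | single q b =>
    induction b using MonoidAlgebra.induction_linear with
    | zero => simp only [Finsupp.single_zero, smul_zero, map_zero]
    | add b b' hb hb' => simp only [Finsupp.single_add, smul_add, map_add, hb, hb']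
    | single a r =>
      induction c using MonoidAlgebra.induction_linear with
      | zero => simp only [zero_smul, map_zero]
      | add c c' hc hc' => simp only [add_smul, map_add, hc, hc']
      | single a' r' =>
        rw [Finsupp.smul_single, smul_eq_mul, single_mul_single, cosetRepr_symm_single,
          subgroupRightModule_smul, cosetRepr_symm_single, mapDomainRingHom_apply,
          mapDomain_single, single_mul_single, mul_assoc, mul_comm r r', Subgroup.coe_subtype,
          ← Subgroup.coe_mul, mul_comm' a]

noncomputable def cosetBasis : Module.Basis (G ⧸ A) k[A] k[G] :=
  .ofRepr ((cosetRepr k A).symm.toAddEquiv.toLinearEquiv (cosetRepr_symm_smul k A)).symm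

theorem alternatingProd_eq_zero_of_index_sq_lt [A.FiniteIndex] {m : ℕ} (hm : A.index ^ 2 < m)
    (x : Fin m → k[G]) : alternatingProd x = 0 := by
  have : Fintype (G ⧸ A) := Fintype.ofFinite _
  refine alternatingProd_eq_zero_of_basis (cosetBasis k A) ?_ x
  rwa [← Nat.card_eq_fintype_card, ← Subgroup.index]

end RightModule

end MonoidAlgebra

theorem group_algebra_pi_of_abelian_by_finite_general (F : Type*) [Field F]
    (G : Type*) [Group G] (A : Subgroup G)
    (hAab : ∀ a b : A, a * b = b * a) (hfin : A.FiniteIndex) :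
    ∃ (m : ℕ) (p : FreeAlgebra F (Fin m)), p ≠ 0 ∧
      ∀ f : FreeAlgebra F (Fin m) →ₐ[F] MonoidAlgebra F G, f p = 0 := by
  have : IsMulCommutative A := .of_comm hAab
  refine ⟨A.index ^ 2 + 1, alternatingProd (FreeAlgebra.ι F),
    FreeAlgebra.alternatingProd_ι_ne_zero F _, fun f => ?_⟩
  rw [map_alternatingProd]
  exact MonoidAlgebra.alternatingProd_eq_zero_of_index_sq_lt F A (Nat.lt_succ_self _) _

/-- If a group `G` has an abelian normal subgroup of finite index, then for any
field `F` the group algebra `F[G]` satisfies a polynomial identity (there is a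
nonzero element of a free algebra annihilated by every `F`-algebra map into
`F[G]`). -/
theorem group_algebra_pi_of_abelian_by_finite (F : Type*) [Field F]
    (G : Type*) [Group G] (A : Subgroup G) (hA : A.Normal)
    (hAab : ∀ a b : A, a * b = b * a) (hfin : A.FiniteIndex) :
    ∃ (m : ℕ) (p : FreeAlgebra F (Fin m)), p ≠ 0 ∧
      ∀ f : FreeAlgebra F (Fin m) →ₐ[F] MonoidAlgebra F G, f p = 0 :=
  group_algebra_pi_of_abelian_by_finite_general F G A hAab hfin
end

section
/- In the real quaternions H, the set C* ∪ C*j is a metabelian but non-abelian maximal subgroup of H*. -/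
/-!
Write `q = a + b j` with `a, b ∈ ℂ`. Multiplying by `ℂ*` on either side preserves the ratio
`|b|² / |q|²`, and this ratio `sin² γ` is a complete invariant of the double coset `ℂ* q ℂ*`,
which is represented by `jRot γ = cos γ + (sin γ) j`. Hence a subgroup `N ⊇ M` is determined by
the additive group of angles `γ` with `jRot γ ∈ N`. If `N` contains some `q ∉ M`, its angle `α`
has `sin 2α ≠ 0`, and conjugating the circle `iRot θ = cos θ + (sin θ) i` by `jRot α` yields
every angle `γ` with `sin² γ ≤ sin² 2α`: a neighbourhood of `0`. An open subgroup of `ℝ` is all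
of `ℝ`, so `N = ℍ*`. Finally `M / ℂ*` has order two, so commutators of `M` lie in the abelian
group `ℂ*`.
-/

open Quaternion Real Filter Topology
open scoped commutatorElement

theorem AddSubgroup.eq_top_of_mem_nhds_zero {G : Type*} [AddGroup G] [TopologicalSpace G]
    [SeparatelyContinuousAdd G] [ConnectedSpace G] (H : AddSubgroup G)
    (h : (H : Set G) ∈ 𝓝 0) : H = ⊤ := by
  have hopen := H.isOpen_of_mem_nhds h
  rw [← SetLike.coe_set_eq, AddSubgroup.coe_top]
  exact IsClopen.eq_univ ⟨H.isClosed_of_isOpen hopen, hopen⟩ ⟨0, H.zero_mem⟩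

theorem Real.exists_eq_mul_cos_and_eq_mul_sin {a b t : ℝ} (h : a ^ 2 + b ^ 2 = t ^ 2) :
    ∃ φ, a = t * cos φ ∧ b = t * sin φ := by
  rcases eq_or_ne t 0 with rfl | ht
  · exact ⟨0, by nlinarith, by nlinarith⟩
  obtain ⟨φ, hφ⟩ := (Complex.norm_eq_one_iff ⟨a / t, b / t⟩).1 <| by
    rw [Complex.norm_eq_sqrt_sq_add_sq, div_pow, div_pow, ← add_div, h, div_self (pow_ne_zero 2 ht),
      sqrt_one]
  have hcos : cos φ = a / t := by simpa using congrArg Complex.re hφ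
  have hsin : sin φ = b / t := by simpa using congrArg Complex.im hφ
  exact ⟨φ, by rw [hcos, mul_div_cancel₀ _ ht], by rw [hsin, mul_div_cancel₀ _ ht]⟩

theorem Real.exists_sin_sq_mul_eq {s t : ℝ} (h : t ^ 2 ≤ s ^ 2) :
    ∃ θ, sin θ ^ 2 * s ^ 2 = t ^ 2 := by
  rcases eq_or_ne s 0 with rfl | hs
  · exact ⟨0, by nlinarith⟩
  have hts : |t / s| ≤ 1 := by
    rw [abs_div, div_le_one (abs_pos.2 hs)]
    exact sq_le_sq.1 h
  refine ⟨arcsin (t / s), ?_⟩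
  rw [sin_arcsin (abs_le.1 hts).1 (abs_le.1 hts).2, div_pow, div_mul_cancel₀ _ (pow_ne_zero 2 hs)]

namespace Quaternion

def IsComplex (q : ℍ[ℝ]) : Prop := q.imJ = 0 ∧ q.imK = 0

def IsComplexMulJ (q : ℍ[ℝ]) : Prop := q.re = 0 ∧ q.imI = 0

section

variable {p q : ℍ[ℝ]}

theorem IsComplex.mul (hp : IsComplex p) (hq : IsComplex q) : IsComplex (p * q) := by
  constructor <;> simp [hp.1, hp.2, hq.1, hq.2]

theorem IsComplex.mul_isComplexMulJ (hp : IsComplex p) (hq : IsComplexMulJ q) :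
    IsComplexMulJ (p * q) := by
  constructor <;> simp [hp.1, hp.2, hq.1, hq.2]

theorem IsComplexMulJ.mul_isComplex (hp : IsComplexMulJ p) (hq : IsComplex q) :
    IsComplexMulJ (p * q) := by
  constructor <;> simp [hp.1, hp.2, hq.1, hq.2]

theorem IsComplexMulJ.mul (hp : IsComplexMulJ p) (hq : IsComplexMulJ q) : IsComplex (p * q) := by
  constructor <;> simp [hp.1, hp.2, hq.1, hq.2]

theorem IsComplex.inv (hq : IsComplex q) : IsComplex q⁻¹ := by
  constructor <;> simp [inv_def, hq.1, hq.2]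

theorem IsComplexMulJ.inv (hq : IsComplexMulJ q) : IsComplexMulJ q⁻¹ := by
  constructor <;> simp [inv_def, hq.1, hq.2]

theorem IsComplex.commute (hp : IsComplex p) (hq : IsComplex q) : Commute p q := by
  ext <;> simp [hp.1, hp.2, hq.1, hq.2] <;> ring

end

def complexUnits : Subgroup ℍ[ℝ]ˣ where
  carrier := {x | IsComplex x}
  one_mem' := ⟨rfl, rfl⟩
  mul_mem' := IsComplex.mul
  inv_mem' {x} hx := by simpa using hx.inv

def complexUnionComplexMulJ : Subgroup ℍ[ℝ]ˣ where
  carrier := {x | IsComplex x} ∪ {x | IsComplexMulJ x}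
  one_mem' := Or.inl ⟨rfl, rfl⟩
  mul_mem' := by
    rintro x y (hx | hx) (hy | hy)
    · exact Or.inl (hx.mul hy)
    · exact Or.inr (hx.mul_isComplexMulJ hy)
    · exact Or.inr (hx.mul_isComplex hy)
    · exact Or.inl (hx.mul hy)
  inv_mem' := by
    rintro x (hx | hx)
    · exact Or.inl (by simpa using hx.inv)
    · exact Or.inr (by simpa using hx.inv)

local notation "M" => complexUnionComplexMulJ

theorem commutatorElement_mem_complexUnits {g h : ℍ[ℝ]ˣ} (hg : g ∈ M) (hh : h ∈ M) :
    ⁅g, h⁆ ∈ complexUnits := by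
  change IsComplex _
  have hval : ((⁅g, h⁆ : ℍ[ℝ]ˣ) : ℍ[ℝ]) = (g * h : ℍ[ℝ]) * (h * g : ℍ[ℝ])⁻¹ := by
    simp [commutatorElement_def, mul_assoc]
  rw [hval]
  rcases hg with hg | hg <;> rcases hh with hh | hh
  · exact (hg.mul hh).mul (hh.mul hg).inv
  · exact (hg.mul_isComplexMulJ hh).mul (hh.mul_isComplex hg).inv
  · exact (hg.mul_isComplex hh).mul (hh.mul_isComplexMulJ hg).inv
  · exact (hg.mul hh).mul (hh.mul hg).inv

theorem commutator_complexUnionComplexMulJ_le :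
    commutator M ≤ complexUnits.comap (M).subtype := by
  rw [commutator_def, Subgroup.commutator_le]
  rintro g - h -
  exact commutatorElement_mem_complexUnits g.2 h.2

noncomputable def iRot (θ : ℝ) : ℍ[ℝ]ˣ :=
  Units.mk0 ⟨cos θ, sin θ, 0, 0⟩ fun h ↦ by
    have hre : cos θ = 0 := congrArg QuaternionAlgebra.re h
    have himI : sin θ = 0 := congrArg QuaternionAlgebra.imI h
    simpa [hre, himI] using sin_sq_add_cos_sq θ

noncomputable def jRot (γ : ℝ) : ℍ[ℝ]ˣ :=
  Units.mk0 ⟨cos γ, 0, sin γ, 0⟩ fun h ↦ by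
    have hre : cos γ = 0 := congrArg QuaternionAlgebra.re h
    have himJ : sin γ = 0 := congrArg QuaternionAlgebra.imJ h
    simpa [hre, himJ] using sin_sq_add_cos_sq γ

section

variable (θ : ℝ)

@[simp] theorem re_iRot : (iRot θ : ℍ[ℝ]).re = cos θ := rfl
@[simp] theorem imI_iRot : (iRot θ : ℍ[ℝ]).imI = sin θ := rfl
@[simp] theorem imJ_iRot : (iRot θ : ℍ[ℝ]).imJ = 0 := rfl
@[simp] theorem imK_iRot : (iRot θ : ℍ[ℝ]).imK = 0 := rfl
@[simp] theorem re_jRot : (jRot θ : ℍ[ℝ]).re = cos θ := rfl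
@[simp] theorem imI_jRot : (jRot θ : ℍ[ℝ]).imI = 0 := rfl
@[simp] theorem imJ_jRot : (jRot θ : ℍ[ℝ]).imJ = sin θ := rfl
@[simp] theorem imK_jRot : (jRot θ : ℍ[ℝ]).imK = 0 := rfl

end

theorem iRot_mem (θ : ℝ) : iRot θ ∈ M := Or.inl ⟨rfl, rfl⟩

theorem jRot_zero : jRot 0 = 1 := by
  ext <;> simp

theorem jRot_add (α β : ℝ) : jRot (α + β) = jRot α * jRot β := by
  ext <;> simp [cos_add, sin_add]
  ring

theorem jRot_neg (γ : ℝ) : jRot (-γ) = (jRot γ)⁻¹ :=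
  eq_inv_of_mul_eq_one_left (by rw [← jRot_add, neg_add_cancel, jRot_zero])

theorem val_jRot_mul_iRot_mul_inv (α θ : ℝ) :
    ((jRot α * iRot θ * (jRot α)⁻¹ : ℍ[ℝ]ˣ) : ℍ[ℝ]) =
      ⟨cos θ, sin θ * cos (2 * α), 0, -(sin θ * sin (2 * α))⟩ := by
  rw [← jRot_neg]
  apply Quaternion.ext <;> simp [cos_two_mul', sin_two_mul]
  · linear_combination cos θ * sin_sq_add_cos_sq α
  all_goals ring

theorem exists_sin_sq_mul_normSq_eq (q : ℍ[ℝ]) :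
    ∃ γ, sin γ ^ 2 * normSq q = q.imJ ^ 2 + q.imK ^ 2 := by
  have hsum : √(q.re ^ 2 + q.imI ^ 2) ^ 2 + √(q.imJ ^ 2 + q.imK ^ 2) ^ 2 = √(normSq q) ^ 2 := by
    rw [sq_sqrt (by positivity), sq_sqrt (by positivity), sq_sqrt normSq_nonneg, normSq_def']
    ring
  obtain ⟨γ, -, hγ⟩ := exists_eq_mul_cos_and_eq_mul_sin hsum
  refine ⟨γ, ?_⟩
  rw [← sq_sqrt (normSq_nonneg (a := q)), ← sq_sqrt (by positivity : 0 ≤ q.imJ ^ 2 + q.imK ^ 2), hγ]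
  ring

theorem exists_eq_mul_iRot_mul_jRot_mul_iRot {q : ℍ[ℝ]} {γ : ℝ}
    (h : sin γ ^ 2 * normSq q = q.imJ ^ 2 + q.imK ^ 2) :
    ∃ θ₁ θ₂, q = ((√(normSq q) : ℝ) : ℍ[ℝ]) * iRot θ₁ * jRot γ * iRot θ₂ := by
  set r := √(normSq q)
  have hr : r ^ 2 = q.re ^ 2 + q.imI ^ 2 + q.imJ ^ 2 + q.imK ^ 2 := by
    rw [sq_sqrt normSq_nonneg, normSq_def']
  rw [normSq_def', ← hr] at h
  obtain ⟨φ, hre, himI⟩ : ∃ φ, q.re = r * cos γ * cos φ ∧ q.imI = r * cos γ * sin φ :=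
    exists_eq_mul_cos_and_eq_mul_sin <| by
      linear_combination h - hr - r ^ 2 * sin_sq_add_cos_sq γ
  obtain ⟨ψ, himJ, himK⟩ : ∃ ψ, q.imJ = r * sin γ * cos ψ ∧ q.imK = r * sin γ * sin ψ :=
    exists_eq_mul_cos_and_eq_mul_sin (by linear_combination -h)
  obtain ⟨θ₁, θ₂, rfl, rfl⟩ : ∃ θ₁ θ₂, φ = θ₁ + θ₂ ∧ ψ = θ₁ - θ₂ :=
    ⟨(φ + ψ) / 2, (φ - ψ) / 2, by ring, by ring⟩
  refine ⟨θ₁, θ₂, ?_⟩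
  apply Quaternion.ext <;> simp [hre, himI, himJ, himK, cos_add, sin_add, cos_sub, sin_sub] <;> ring

theorem mem_of_sin_two_mul_eq_zero {x : ℍ[ℝ]ˣ} {γ : ℝ}
    (h : sin γ ^ 2 * normSq (x : ℍ[ℝ]) = (x : ℍ[ℝ]).imJ ^ 2 + (x : ℍ[ℝ]).imK ^ 2)
    (hγ : sin (2 * γ) = 0) : x ∈ M := by
  rw [normSq_def'] at h
  rw [sin_two_mul, mul_eq_zero, mul_eq_zero] at hγ
  rcases hγ with (h2 | hsin) | hcos
  · norm_num at h2
  · left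
    rw [hsin] at h
    constructor <;> nlinarith [sq_nonneg (x : ℍ[ℝ]).imJ, sq_nonneg (x : ℍ[ℝ]).imK]
  · right
    have hsin : sin γ ^ 2 = 1 := by nlinarith [sin_sq_add_cos_sq γ]
    rw [hsin] at h
    constructor <;> nlinarith [sq_nonneg (x : ℍ[ℝ]).re, sq_nonneg (x : ℍ[ℝ]).imI]

section Overgroup

variable {N : Subgroup ℍ[ℝ]ˣ}

theorem mem_iff_jRot_mem (hMN : M ≤ N) {x : ℍ[ℝ]ˣ} {γ : ℝ}
    (h : sin γ ^ 2 * normSq (x : ℍ[ℝ]) = (x : ℍ[ℝ]).imJ ^ 2 + (x : ℍ[ℝ]).imK ^ 2) :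
    x ∈ N ↔ jRot γ ∈ N := by
  obtain ⟨θ₁, θ₂, hx⟩ := exists_eq_mul_iRot_mul_jRot_mul_iRot h
  have hr : ((√(normSq (x : ℍ[ℝ])) : ℝ) : ℍ[ℝ]) ≠ 0 := by
    rw [Ne, ← coe_zero, coe_inj, sqrt_eq_zero normSq_nonneg, normSq_eq_zero]
    exact x.ne_zero
  set u := Units.mk0 _ hr
  have hu : u ∈ M := Or.inl ⟨by simp [u], by simp [u]⟩
  rw [show x = u * iRot θ₁ * jRot γ * iRot θ₂ from Units.ext (by simpa [u] using hx),
    N.mul_mem_cancel_right (hMN (iRot_mem θ₂)),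
    N.mul_mem_cancel_left (N.mul_mem (hMN hu) (hMN (iRot_mem θ₁)))]

theorem jRot_mem_of_sin_sq_le (hMN : M ≤ N) {α γ : ℝ} (hα : jRot α ∈ N)
    (hγ : sin γ ^ 2 ≤ sin (2 * α) ^ 2) : jRot γ ∈ N := by
  obtain ⟨θ, hθ⟩ := exists_sin_sq_mul_eq hγ
  have hy : jRot α * iRot θ * (jRot α)⁻¹ ∈ N :=
    N.mul_mem (N.mul_mem hα (hMN (iRot_mem θ))) (N.inv_mem hα)
  refine (mem_iff_jRot_mem hMN ?_).1 hy
  rw [normSq_def', val_jRot_mul_iRot_mul_inv]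
  dsimp only
  linear_combination sin γ ^ 2 * sin θ ^ 2 * sin_sq_add_cos_sq (2 * α) +
    sin γ ^ 2 * sin_sq_add_cos_sq θ - hθ

def angleSubgroup (N : Subgroup ℍ[ℝ]ˣ) : AddSubgroup ℝ where
  carrier := {γ | jRot γ ∈ N}
  zero_mem' := by simp [jRot_zero, N.one_mem]
  add_mem' {α β} hα hβ := by simpa [jRot_add] using N.mul_mem hα hβ
  neg_mem' {γ} hγ := by simpa [jRot_neg] using N.inv_mem hγ

theorem eq_top_of_complexUnionComplexMulJ_lt (hMN : M < N) : N = ⊤ := by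
  obtain ⟨q, hqN, hqM⟩ := SetLike.exists_of_lt hMN
  obtain ⟨α, hα⟩ := exists_sin_sq_mul_normSq_eq (q : ℍ[ℝ])
  have hαN : jRot α ∈ N := (mem_iff_jRot_mem hMN.le hα).1 hqN
  have hsin : sin (2 * α) ≠ 0 := fun h ↦ hqM (mem_of_sin_two_mul_eq_zero hα h)
  have hnhds : (angleSubgroup N : Set ℝ) ∈ 𝓝 0 := by
    refine mem_of_superset ?_ fun γ hγ ↦ jRot_mem_of_sin_sq_le hMN.le hαN (le_of_lt hγ)
    exact (isOpen_lt (continuous_sin.pow 2) continuous_const).mem_nhds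
      (by simpa using sq_pos_of_ne_zero hsin)
  rw [Subgroup.eq_top_iff']
  intro x
  obtain ⟨γ, hγ⟩ := exists_sin_sq_mul_normSq_eq (x : ℍ[ℝ])
  refine (mem_iff_jRot_mem hMN.le hγ).2 ?_
  change γ ∈ angleSubgroup N
  simp [(angleSubgroup N).eq_top_of_mem_nhds_zero hnhds]

end Overgroup

end Quaternion

/-- In the real quaternions, `ℂ* ∪ ℂ*j` (where `ℂ = ℝ + ℝi` and `ℂ*j` consists
of the quaternions with zero real and `i`-parts) is a maximal subgroup of
`ℍ*` which is metabelian but not abelian. -/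
theorem complex_union_complex_j_maximal_metabelian_not_abelian :
    ∃ M : Subgroup (ℍ[ℝ])ˣ,
      (M : Set (ℍ[ℝ])ˣ) =
        {x : (ℍ[ℝ])ˣ | x.val.imJ = 0 ∧ x.val.imK = 0} ∪
        {x : (ℍ[ℝ])ˣ | x.val.re = 0 ∧ x.val.imI = 0} ∧
      IsCoatom M ∧
      (∀ a b : (commutator M), a * b = b * a) ∧
      ¬ (∀ a b : M, a * b = b * a) := by
  refine ⟨complexUnionComplexMulJ, rfl, ⟨?_, fun _ ↦ eq_top_of_complexUnionComplexMulJ_lt⟩, ?_, ?_⟩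
  · intro htop
    have h : jRot (π / 4) ∈ complexUnionComplexMulJ := htop ▸ Subgroup.mem_top _
    rcases h with ⟨h, -⟩ | ⟨h, -⟩ <;> simp at h
  · intro a b
    have ha : IsComplex _ := commutator_complexUnionComplexMulJ_le a.2
    have hb : IsComplex _ := commutator_complexUnionComplexMulJ_le b.2
    exact Subtype.ext (Subtype.ext (Units.ext (ha.commute hb).eq))
  · intro hab
    have h := congrArg (fun x : complexUnionComplexMulJ ↦ ((x : ℍ[ℝ]ˣ) : ℍ[ℝ]).imK)
      (hab ⟨iRot (π / 2), iRot_mem _⟩ ⟨jRot (π / 2), Or.inr ⟨by simp, by simp⟩⟩)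
    norm_num at h
end
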